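/- arXiv:2106.02706 — 6 statements merged into one kernel-verified Lean document; each statement's English description precedes it below -/
import Mathlib

section
/- Let F : C ⥤ D and G : D ⥤ C be functors between categories, and let η : 𝟭_C ⟶ F ⋙ G and ε : G ⋙ F ⟶ 𝟭_D be natural transformations. Suppose that for every object X of C the composite F(η_X) ≫ ε_{F X} : F X ⟶ F X is an isomorphism, and for every object Y of D the composite η_{G Y} ≫ G(ε_Y) : G Y ⟶ G Y is an isomorphism. Then for all objects X of C and Y of D the map Hom_D(F X, Y) → Hom_C(X, G Y) sending f to η_X ≫ G(f) is a bijection; in particular F is left adjoint to G with an adjunction whose unit is η. -/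
open CategoryTheory

/-- paper's Lemma 1.8, 1-categorical form:
Given functors `F : C ⥤ D`, `G : D ⥤ C` and natural transformations
`η : 𝟭 C ⟶ F ⋙ G`, `ε : G ⋙ F ⟶ 𝟭 D` such that the two triangle composites are
isomorphisms, the map `f ↦ η_X ≫ G.map f` is a bijection for all `X`, `Y`; in
particular `F ⊣ G` with an adjunction whose unit is `η`. -/
theorem stmt_0 {C : Type*} {D : Type*} [Category C] [Category D]
    (F : C ⥤ D) (G : D ⥤ C) (η : 𝟭 C ⟶ F ⋙ G) (ε : G ⋙ F ⟶ 𝟭 D)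
    (h1 : ∀ X : C, IsIso (F.map (η.app X) ≫ ε.app (F.obj X)))
    (h2 : ∀ Y : D, IsIso (η.app (G.obj Y) ≫ G.map (ε.app Y))) :
    (∀ (X : C) (Y : D),
      Function.Bijective (fun f : F.obj X ⟶ Y => η.app X ≫ G.map f)) ∧
    ∃ adj : F ⊣ G, adj.unit = η := by
  have key1 : ∀ (X : C) (Y : D) (f : F.obj X ⟶ Y),
      F.map (η.app X ≫ G.map f) ≫ ε.app Y =
        (F.map (η.app X) ≫ ε.app (F.obj X)) ≫ f := by
    intro X Y f
    have := ε.naturality f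
    simp only [Functor.comp_map, Functor.id_map] at this
    simp [this]
  have key2 : ∀ (X : C) (Y : D) (g : X ⟶ G.obj Y),
      η.app X ≫ G.map (F.map g ≫ ε.app Y) =
        g ≫ (η.app (G.obj Y) ≫ G.map (ε.app Y)) := by
    intro X Y g
    have := η.naturality g
    simp only [Functor.comp_map, Functor.id_map] at this
    simp [G.map_comp, ← Category.assoc, ← this]
  have bij : ∀ (X : C) (Y : D),
      Function.Bijective (fun f : F.obj X ⟶ Y => η.app X ≫ G.map f) := by
    intro X Y
    constructor
    · intro f1 f2 h
      haveI := h1 X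
      have h' := congrArg (fun g : X ⟶ G.obj Y => F.map g ≫ ε.app Y) h
      simp only at h'
      rw [key1, key1] at h'
      exact (cancel_epi (F.map (η.app X) ≫ ε.app (F.obj X))).mp h'
    · intro g
      haveI := h2 Y
      refine ⟨F.map (g ≫ inv (η.app (G.obj Y) ≫ G.map (ε.app Y))) ≫ ε.app Y, ?_⟩
      simp only
      rw [key2]
      simp
  refine ⟨bij, ?_⟩
  refine ⟨Adjunction.mkOfHomEquiv
    { homEquiv := fun X Y => Equiv.ofBijective _ (bij X Y)
      homEquiv_naturality_left_symm := ?_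
      homEquiv_naturality_right := ?_ }, ?_⟩
  · intro X' X Y f g
    apply (bij X' Y).1
    show η.app X' ≫ G.map _ = η.app X' ≫ G.map (F.map f ≫ _)
    beta_reduce
    have e1 : η.app X' ≫ G.map ((Equiv.ofBijective _ (bij X' Y)).symm (f ≫ g)) = f ≫ g :=
      Equiv.ofBijective_apply_symm_apply _ (bij X' Y) _
    have e2 : η.app X ≫ G.map ((Equiv.ofBijective _ (bij X Y)).symm g) = g :=
      Equiv.ofBijective_apply_symm_apply _ (bij X Y) _
    have hn := η.naturality f
    simp only [Functor.comp_map, Functor.id_map] at hn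
    exact e1.trans (by rw [G.map_comp, ← Category.assoc, ← hn, Category.assoc]; exact congrArg (fun t => f ≫ t) e2.symm)
  · intro X Y Y' f g
    show η.app X ≫ G.map (f ≫ g) = (η.app X ≫ G.map f) ≫ G.map g
    simp
  · ext X
    simp [Adjunction.mkOfHomEquiv, Equiv.ofBijective]
end

section
/- Let A and K be small categories and F : A ⥤ K an essentially surjective functor. Then the restriction functor F* : Pr(K) ⥤ Pr(A), given by precomposition with Fᵒᵖ, is a monadic right adjoint: it admits a left adjoint (left Kan extension along Fᵒᵖ), it is conservative, and the comparison functor from Pr(K) to the Eilenberg–Moore category of the induced monad on Pr(A) is an equivalence. -/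
/-!
Left Kan extension along `Fᵒᵖ` is left adjoint to `F*`, and `F*` preserves all colimits since
colimits of presheaves are computed pointwise. Essential surjectivity makes `F*` conservative:
the component of a natural transformation at `k ≅ F a` is conjugate to its component at `F a`.
The reflexive form of Beck's monadicity theorem then applies.
-/

open CategoryTheory

instance Functor.reflectsIsomorphisms_whiskeringLeft_obj {C D E : Type*} [Category C]
    [Category D] [Category E] (F : C ⥤ D) [F.EssSurj] :
    ((Functor.whiskeringLeft C D E).obj F).ReflectsIsomorphisms where
  reflects f hf := by
    rw [NatTrans.isIso_iff_isIso_app] at hf ⊢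
    intro d
    rw [← NatTrans.isIso_app_iff_of_iso f (F.objObjPreimageIso d)]
    exact hf _

/-- key step of the paper's Prop:Monadic, 1-categorical form:
If `F : A ⥤ K` is an essentially surjective functor between small categories,
then the restriction functor `F* : Pr(K) ⥤ Pr(A)` (precomposition with `Fᵒᵖ`)
is a monadic right adjoint. -/
theorem stmt_4 {A K : Type u} [SmallCategory A] [SmallCategory K]
    (F : A ⥤ K) (hF : F.EssSurj) :
    Nonempty (MonadicRightAdjoint
      ((Functor.whiskeringLeft Aᵒᵖ Kᵒᵖ (Type u)).obj F.op)) := by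
  have : Monad.PreservesColimitOfIsReflexivePair
      ((Functor.whiskeringLeft Aᵒᵖ Kᵒᵖ (Type u)).obj F.op) := ⟨fun _ _ _ _ _ => inferInstance⟩
  exact ⟨Monad.monadicOfHasPreservesReflexiveCoequalizersOfReflectsIsomorphisms
    (F.op.lanAdjunction (Type u))⟩
end

section
/- Let C and K be small categories and F : C ⥤ K an essentially surjective functor admitting a right adjoint. Let M be the iso-comma category of the Yoneda embedding y_C : C ⥤ Pr(C) and the restriction functor F* : Pr(K) ⥤ Pr(C): objects of M are triples (c, P, φ) with c an object of C, P a presheaf on K, and φ : y_C(c) ≅ F*(P) an isomorphism. Then the projection functor M ⥤ C, (c, P, φ) ↦ c, is a monadic right adjoint. -/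
/-!
We apply Beck's monadicity theorem to the projection `M ⥤ C`.

Since `yoneda` is fully faithful and the structure maps are invertible, a morphism of `M` is
determined by its presheaf component. Hence, if `d` represents `F* (y (F c))` (take
`d = G (F c)` for a right adjoint `G` of `F`), morphisms from `(d, y (F c), φ)` to `(c', P, ψ)`
correspond to elements of `P (F c) = (F* P) c ≅ (c ⟶ c')`, which gives the left adjoint.

The projection reflects isomorphisms because `F*`, restriction along an essentially surjective
functor, does. Coequalizers of pairs with a split coequalizer in `C` are computed componentwise:
`yoneda` preserves the split coequalizer and `F*` preserves the coequalizer of presheaves, so the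
comparison map between the two components is a map between colimits of isomorphic diagrams, hence
invertible.
-/

open CategoryTheory Limits Opposite

universe v u₁ u₂ u

namespace CategoryTheory

instance Functor.reflectsIsomorphisms_whiskeringLeft_obj_of_essSurj {C D E : Type*}
    [Category C] [Category D] [Category E] (F : C ⥤ D) [F.EssSurj] :
    ((Functor.whiskeringLeft C D E).obj F).ReflectsIsomorphisms where
  reflects α h := by
    rw [NatTrans.isIso_iff_isIso_app] at h ⊢
    intro d
    rw [← NatTrans.isIso_app_iff_of_iso α (F.objObjPreimageIso d)]
    exact h _

variable {A B T : Type*} [Category A] [Category B] [Category T]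

lemma Comma.isIso_coconeOfPreserves_pt_hom {L : A ⥤ T} {R : B ⥤ T} {J : Type*} [Category J]
    {D : J ⥤ Comma L R} [∀ j, IsIso (D.obj j).hom] [PreservesColimit (D ⋙ Comma.fst L R) L]
    [PreservesColimit (D ⋙ Comma.snd L R) R] {c₁ : Cocone (D ⋙ Comma.fst L R)}
    (t₁ : IsColimit c₁) {c₂ : Cocone (D ⋙ Comma.snd L R)} (t₂ : IsColimit c₂) :
    IsIso (Comma.coconeOfPreserves D t₁ c₂).pt.hom := by
  have (j : J) : IsIso ((Functor.whiskerLeft D (Comma.natTrans L R)).app j) :=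
    inferInstanceAs (IsIso (D.obj j).hom)
  have : IsIso (Functor.whiskerLeft D (Comma.natTrans L R)) := NatIso.isIso_of_isIso_app _
  have t₂' : IsColimit (Comma.colimitAuxiliaryCocone D c₂) :=
    (IsColimit.precomposeHomEquiv (asIso (Functor.whiskerLeft D (Comma.natTrans L R))) _).symm
      (isColimitOfPreserves R t₂)
  exact ((isColimitOfPreserves L t₁).coconePointUniqueUpToIso t₂').isIso_hom

variable (L : A ⥤ T) (R : B ⥤ T)

abbrev IsoComma := ObjectProperty.FullSubcategory (fun X : Comma L R => IsIso X.hom)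

namespace IsoComma

abbrev fst : IsoComma L R ⥤ A := ObjectProperty.ι _ ⋙ Comma.fst L R

abbrev snd : IsoComma L R ⥤ B := ObjectProperty.ι _ ⋙ Comma.snd L R

variable {L R}

instance (X : IsoComma L R) : IsIso X.obj.hom := X.property

noncomputable def fullyFaithfulSnd [L.Full] [L.Faithful] : (snd L R).FullyFaithful where
  preimage {X Y} b := ObjectProperty.homMk
    { left := L.preimage (X.obj.hom ≫ R.map b ≫ inv Y.obj.hom)
      right := b
      w := by simp }
  preimage_map f := by
    ext
    · exact L.map_injective (by simp [← Category.assoc, IsIso.comp_inv_eq])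
    · rfl

instance reflectsIsomorphisms_fst [R.ReflectsIsomorphisms] :
    (fst L R).ReflectsIsomorphisms where
  reflects {X Y} f (_ : IsIso f.hom.left) := by
    have hw : R.map f.hom.right = inv X.obj.hom ≫ L.map f.hom.left ≫ Y.obj.hom := by
      simp [f.hom.w]
    have : IsIso (R.map f.hom.right) := by rw [hw]; infer_instance
    have : IsIso f.hom.right := isIso_of_reflects_iso _ R
    have : IsIso ((ObjectProperty.ι _).map f) :=
      (Comma.isoMk (asIso f.hom.left) (asIso f.hom.right) f.hom.w).isIso_hom
    exact isIso_of_fully_faithful (ObjectProperty.ι _) f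

noncomputable instance createsColimitFst {J : Type*} [Category J] (D : J ⥤ IsoComma L R)
    [R.ReflectsIsomorphisms] [PreservesColimit (D ⋙ fst L R) L] [HasColimit (D ⋙ snd L R)]
    [PreservesColimit (D ⋙ snd L R) R] : CreatesColimit D (fst L R) :=
  createsColimitOfReflectsIso fun _ t₁ =>
    have : PreservesColimit ((D ⋙ ObjectProperty.ι _) ⋙ Comma.fst L R) L :=
      inferInstanceAs (PreservesColimit (D ⋙ fst L R) L)
    have : PreservesColimit ((D ⋙ ObjectProperty.ι _) ⋙ Comma.snd L R) R :=
      inferInstanceAs (PreservesColimit (D ⋙ snd L R) R)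
    have (j : J) : IsIso ((D ⋙ ObjectProperty.ι _).obj j).hom := (D.obj j).property
    let t₂ := colimit.isColimit (D ⋙ snd L R)
    let cc : Cocone (D ⋙ ObjectProperty.ι _) :=
      Comma.coconeOfPreserves _ t₁ (colimit.cocone (D ⋙ snd L R))
    let c : Cocone D :=
      { pt := ⟨cc.pt, Comma.isIso_coconeOfPreserves_pt_hom t₁ t₂⟩
        ι :=
          { app j := ObjectProperty.homMk (cc.ι.app j)
            naturality _ _ g :=
              ObjectProperty.hom_ext _ ((cc.w g).trans (Category.comp_id _).symm) } }
    { liftedCocone := c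
      validLift := Cocone.ext (Iso.refl _) fun _ => Category.comp_id _
      makesColimit :=
        isColimitOfReflects (ObjectProperty.ι _) (Comma.coconeOfPreservesIsColimit _ t₁ t₂) }

noncomputable instance createsColimitOfIsSplitPairFst [R.ReflectsIsomorphisms]
    [HasCoequalizers B] [PreservesColimitsOfShape WalkingParallelPair R] :
    Monad.CreatesColimitOfIsSplitPair (fst L R) where
  out f g _ :=
    have : PreservesColimit (parallelPair f g ⋙ fst L R) L :=
      preservesColimit_of_iso_diagram L
        (parallelPair.ext (Iso.refl _) (Iso.refl _) (by simp) (by simp) :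
          parallelPair ((fst L R).map f) ((fst L R).map g) ≅ parallelPair f g ⋙ fst L R)
    createsColimitFst _

end IsoComma

section Presheaves

variable {C : Type u₁} [Category.{v} C] {K : Type u₂} [Category.{v} K] (F : C ⥤ K)

abbrev presheafRestriction : (Kᵒᵖ ⥤ Type v) ⥤ (Cᵒᵖ ⥤ Type v) :=
  (Functor.whiskeringLeft Cᵒᵖ Kᵒᵖ (Type v)).obj F.op

variable {F}

namespace IsoComma

def ofYonedaIso {c d : C}
    (φ : yoneda.obj d ≅ (presheafRestriction F).obj (yoneda.obj (F.obj c))) :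
    IsoComma yoneda (presheafRestriction F) :=
  ⟨⟨d, yoneda.obj (F.obj c), φ.hom⟩, inferInstance⟩

noncomputable def ofYonedaIsoHomEquiv {c d : C}
    (φ : yoneda.obj d ≅ (presheafRestriction F).obj (yoneda.obj (F.obj c)))
    (X : IsoComma yoneda (presheafRestriction F)) :
    (ofYonedaIso φ ⟶ X) ≃ (c ⟶ X.obj.left) :=
  (fullyFaithfulSnd.homEquiv.trans yonedaEquiv).trans
    ((asIso X.obj.hom).app (op c)).symm.toEquiv

lemma ofYonedaIsoHomEquiv_comp {c d : C}
    (φ : yoneda.obj d ≅ (presheafRestriction F).obj (yoneda.obj (F.obj c)))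
    {X Y : IsoComma yoneda (presheafRestriction F)} (h : ofYonedaIso φ ⟶ X) (g : X ⟶ Y) :
    ofYonedaIsoHomEquiv φ Y (h ≫ g) = ofYonedaIsoHomEquiv φ X h ≫ g.hom.left := by
  have hw : inv X.obj.hom ≫ yoneda.map g.hom.left =
      (presheafRestriction F).map g.hom.right ≫ inv Y.obj.hom := by
    rw [IsIso.inv_comp_eq, ← Category.assoc, IsIso.eq_comp_inv]
    exact g.hom.w
  have := ConcreteCategory.congr_hom (NatTrans.congr_app hw (op c)) (yonedaEquiv h.hom.right)
  change (inv Y.obj.hom).app (op c) (yonedaEquiv (X := F.obj c) (h.hom.right ≫ g.hom.right)) =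
    (inv X.obj.hom).app (op c) (yonedaEquiv (X := F.obj c) h.hom.right) ≫ g.hom.left
  rw [yonedaEquiv_comp (X := F.obj c) h.hom.right g.hom.right]
  simpa using this.symm

lemma isRightAdjoint_fst_presheafRestriction [F.IsLeftAdjoint] :
    (fst yoneda (presheafRestriction F)).IsRightAdjoint :=
  let adj := Adjunction.ofIsLeftAdjoint F
  ⟨_, ⟨Adjunction.adjunctionOfEquivLeft
    (fun c X => ofYonedaIsoHomEquiv (adj.compYonedaIso.app (F.obj c)) X)
    (fun _ _ _ g h => ofYonedaIsoHomEquiv_comp _ h g)⟩⟩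

end IsoComma

end Presheaves

end CategoryTheory

/-- paper's lem:Kl_pb_monadicity, 1-categorical form:
Let `F : C ⥤ K` be an essentially surjective functor between small categories
admitting a right adjoint.  Form the iso-comma category `M` of the Yoneda
embedding `y_C : C ⥤ Pr(C)` and the restriction functor `F* : Pr(K) ⥤ Pr(C)`,
i.e. the full subcategory of the comma category spanned by objects whose
structure map is an isomorphism.  Then the projection `M ⥤ C` is a monadic
right adjoint. -/
theorem stmt_5 {C K : Type u} [SmallCategory C] [SmallCategory K]
    (F : C ⥤ K) (hsurj : F.EssSurj) (hadj : F.IsLeftAdjoint) :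
    Nonempty (MonadicRightAdjoint
      (ObjectProperty.ι
          (fun X : Comma yoneda ((Functor.whiskeringLeft Cᵒᵖ Kᵒᵖ (Type u)).obj F.op) =>
            IsIso X.hom) ⋙
        Comma.fst yoneda ((Functor.whiskeringLeft Cᵒᵖ Kᵒᵖ (Type u)).obj F.op))) := by
  have := IsoComma.isRightAdjoint_fst_presheafRestriction (F := F)
  exact ⟨Monad.monadicOfCreatesGSplitCoequalizers (Adjunction.ofIsRightAdjoint _)⟩
end

section
/- Let U₁ : D₁ ⥤ C and U₂ : D₂ ⥤ C be monadic right adjoints, with chosen adjunctions L₁ ⊣ U₁ and L₂ ⊣ U₂, and let t : D₁ ⥤ D₂ be a functor together with a natural isomorphism α : U₁ ≅ t ⋙ U₂. Let β : L₂ ⟶ L₁ ⋙ t be the natural transformation whose component at an object X of C is the adjunct, under L₂ ⊣ U₂, of the composite X ⟶ U₁(L₁ X) ⟶ U₂(t(L₁ X)) of the unit of L₁ ⊣ U₁ with α at L₁ X. Then t is an equivalence of categories if and only if β is a natural isomorphism. -/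
/-!
The adjunct `β` is the mate of `α`. It induces a morphism of monads `U₂L₂ ⟶ U₁L₁`,
`U₂ β ≫ α⁻¹`, whose restriction-of-scalars functor on algebras is identified, through the
comparison functors, with `t`. So if `β` is invertible, the monad morphism is an isomorphism,
its algebra functor is an equivalence, and monadicity of `U₁` and `U₂` makes `t` one.
Conversely, if `t` is an equivalence then `L₁ ⋙ t ⊣ t⁻¹ ⋙ U₁ ≅ U₂`, and the conjugate of `β`
under this adjunction and `L₂ ⊣ U₂` is `α` followed by the counit of `t`, an isomorphism;
conjugation reflects isomorphisms.
-/

open CategoryTheory Category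

namespace CategoryTheory.Adjunction

variable {C D₁ D₂ : Type*} [Category C] [Category D₁] [Category D₂]
  {U₁ : D₁ ⥤ C} {U₂ : D₂ ⥤ C} {L₁ : C ⥤ D₁} {L₂ : C ⥤ D₂}
  (adj₁ : L₁ ⊣ U₁) (adj₂ : L₂ ⊣ U₂) {t : D₁ ⥤ D₂}

def mate (α : U₁ ⟶ t ⋙ U₂) : L₂ ⟶ L₁ ⋙ t :=
  (mateEquiv (G := 𝟭 C) adj₁ adj₂).symm α

lemma mate_app (α : U₁ ⟶ t ⋙ U₂) (X : C) :
    (mate adj₁ adj₂ α).app X =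
      (adj₂.homEquiv X (t.obj (L₁.obj X))).symm (adj₁.unit.app X ≫ α.app (L₁.obj X)) := by
  simp [mate, mateEquiv, homEquiv_counit]

lemma unit_comp_map_mate_app (α : U₁ ⟶ t ⋙ U₂) (X : C) :
    adj₂.unit.app X ≫ U₂.map ((mate adj₁ adj₂ α).app X) =
      adj₁.unit.app X ≫ α.app (L₁.obj X) :=
  (unit_mateEquiv_symm (G := 𝟭 C) (H := t) adj₁ adj₂ α X).symm

lemma mate_app_comp_map_counit (α : U₁ ⟶ t ⋙ U₂) (d : D₁) :
    (mate adj₁ adj₂ α).app (U₁.obj d) ≫ t.map (adj₁.counit.app d) =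
      L₂.map (α.app d) ≫ adj₂.counit.app (t.obj d) :=
  (mateEquiv_counit_symm (G := 𝟭 C) (H := t) adj₁ adj₂ α d).symm

theorem isIso_mate_of_equivalence (e : D₁ ≌ D₂) (α : U₁ ≅ e.functor ⋙ U₂) :
    IsIso (mate adj₁ adj₂ α.hom) := by
  let A := adj₁.comp e.toAdjunction
  have hconj : ∀ Y, (conjugateEquiv A adj₂ (mate adj₁ adj₂ α.hom)).app Y =
      (α.app _ ≪≫ U₂.mapIso (e.counitIso.app Y)).hom := by
    intro Y
    simp only [conjugateEquiv_apply_app, A, Functor.comp_obj, comp_counit_app,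
      Equivalence.toAdjunction_counit, Functor.map_comp]
    rw [← U₂.map_comp_assoc, mate_app_comp_map_counit]
    simp
  have : ∀ Y, IsIso ((conjugateEquiv A adj₂ (mate adj₁ adj₂ α.hom)).app Y) := fun Y => by
    rw [hconj]; infer_instance
  have : IsIso (conjugateEquiv A adj₂ (mate adj₁ adj₂ α.hom)) := NatIso.isIso_of_isIso_app _
  exact conjugateEquiv_of_iso A adj₂ _

variable (α : U₁ ≅ t ⋙ U₂)

def monadHomOfMate : adj₂.toMonad ⟶ adj₁.toMonad where
  app X := U₂.map ((mate adj₁ adj₂ α.hom).app X) ≫ α.inv.app (L₁.obj X)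
  naturality X Y f := by
    have h := (mate adj₁ adj₂ α.hom).naturality f
    dsimp [toMonad] at h ⊢
    rw [← U₂.map_comp_assoc, h, U₂.map_comp_assoc, ← Functor.comp_map, α.inv.naturality]
    simp only [assoc]
  app_η X := by
    dsimp [toMonad]
    rw [reassoc_of% unit_comp_map_mate_app, α.hom_inv_id_app, comp_id]
  app_μ X := by
    have hα := α.inv.naturality (adj₁.counit.app (L₁.obj X))
    dsimp [toMonad] at hα ⊢
    simp only [assoc, ← hα, ← U₂.map_comp_assoc]
    congr 2
    rw [mate_app_comp_map_counit, ← L₂.map_comp_assoc, assoc, α.inv_hom_id_app]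
    simp

def comparisonCompAlgebraFunctorIso :
    Monad.comparison adj₁ ⋙ Monad.algebraFunctorOfMonadHom (monadHomOfMate adj₁ adj₂ α) ≅
      t ⋙ Monad.comparison adj₂ :=
  NatIso.ofComponents
    (fun d => Monad.Algebra.isoMk (α.app d) (by
      have hα := α.hom.naturality (adj₁.counit.app d)
      dsimp at hα ⊢
      dsimp [monadHomOfMate, toMonad, Monad.comparison, Monad.algebraFunctorOfMonadHom]
      rw [assoc, assoc, hα, α.inv_hom_id_app_assoc, ← U₂.map_comp, ← U₂.map_comp,
        mate_app_comp_map_counit]))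
    (fun f => by ext; exact α.hom.naturality f)

instance isIso_monadHomOfMate [IsIso (mate adj₁ adj₂ α.hom)] :
    IsIso (monadHomOfMate adj₁ adj₂ α) := by
  have : ∀ X, IsIso (((monadToFunctor C).map (monadHomOfMate adj₁ adj₂ α)).app X) := fun X =>
    IsIso.comp_isIso' (Functor.map_isIso U₂ ((mate adj₁ adj₂ α.hom).app X))
      (α.app (L₁.obj X)).isIso_inv
  have : IsIso ((monadToFunctor C).map (monadHomOfMate adj₁ adj₂ α)) :=
    NatIso.isIso_of_isIso_app _
  exact isIso_of_reflects_iso _ (monadToFunctor C)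

theorem isEquivalence_of_isIso_mate [(Monad.comparison adj₁).IsEquivalence]
    [(Monad.comparison adj₂).IsEquivalence] [IsIso (mate adj₁ adj₂ α.hom)] : t.IsEquivalence := by
  have : (Monad.algebraFunctorOfMonadHom (monadHomOfMate adj₁ adj₂ α)).IsEquivalence :=
    (Monad.algebraEquivOfIsoMonads (asIso (monadHomOfMate adj₁ adj₂ α))).isEquivalence_inverse
  have : (t ⋙ Monad.comparison adj₂).IsEquivalence :=
    Functor.isEquivalence_of_iso (comparisonCompAlgebraFunctorIso adj₁ adj₂ α)
  exact Functor.isEquivalence_of_comp_right t (Monad.comparison adj₂)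

theorem isEquivalence_iff_isIso_mate [(Monad.comparison adj₁).IsEquivalence]
    [(Monad.comparison adj₂).IsEquivalence] : t.IsEquivalence ↔ IsIso (mate adj₁ adj₂ α.hom) :=
  ⟨fun _ => isIso_mate_of_equivalence adj₁ adj₂ t.asEquivalence α,
    fun _ => isEquivalence_of_isIso_mate adj₁ adj₂ α⟩

end CategoryTheory.Adjunction

open CategoryTheory.Adjunction in
/-- paper's cor:equiv_of_monaidc, 1-categorical form:
Let `U₁ : D₁ ⥤ C` and `U₂ : D₂ ⥤ C` be monadic right adjoints with chosen
adjunctions `L₁ ⊣ U₁`, `L₂ ⊣ U₂`, `t : D₁ ⥤ D₂` a functor and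
`α : U₁ ≅ t ⋙ U₂` a natural isomorphism.  Then `t` is an equivalence if and
only if for every `X : C` the adjunct `L₂ X ⟶ t (L₁ X)` of
`η₁_X ≫ α_{L₁ X}` is an isomorphism (i.e. the mate `β : L₂ ⟶ L₁ ⋙ t` is a
natural isomorphism). -/
theorem stmt_6 {C D₁ D₂ : Type*} [Category C] [Category D₁] [Category D₂]
    (U₁ : D₁ ⥤ C) (U₂ : D₂ ⥤ C) (L₁ : C ⥤ D₁) (L₂ : C ⥤ D₂)
    (adj₁ : L₁ ⊣ U₁) (adj₂ : L₂ ⊣ U₂)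
    (h₁ : (Monad.comparison adj₁).IsEquivalence)
    (h₂ : (Monad.comparison adj₂).IsEquivalence)
    (t : D₁ ⥤ D₂) (α : U₁ ≅ t ⋙ U₂) :
    t.IsEquivalence ↔
      ∀ X : C, IsIso ((adj₂.homEquiv X (t.obj (L₁.obj X))).symm
        (adj₁.unit.app X ≫ α.hom.app (L₁.obj X))) := by
  rw [isEquivalence_iff_isIso_mate adj₁ adj₂ α, NatTrans.isIso_iff_isIso_app]
  simp only [mate_app]
end

section
/- Let C be a small category, κ a regular cardinal, and T a monad on the presheaf category Pr(C) = Cᵒᵖ ⥤ Type whose underlying endofunctor preserves colimits of κ-filtered diagrams. Then the Eilenberg–Moore category Alg(T) of T-algebras has all small colimits. -/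
open CategoryTheory

/-- A category `J` is `κ`-filtered if every diagram in `J` of size smaller than
`κ` (measured by the cardinality of its category of arrows) admits a cocone. -/
def IsCardinalFiltered (J : Type u) [SmallCategory J] (κ : Cardinal.{u}) : Prop :=
  ∀ (A : Type u) [SmallCategory A], Cardinal.mk (Arrow A) < κ →
    ∀ F : A ⥤ J, Nonempty (Limits.Cocone F)

/-!
By the general adjoint functor theorem, since `Alg(T)` is complete it suffices to check the
solution set condition for the diagonal functor `Alg(T) ⥤ (J ⥤ Alg(T))`. A cocone under
`F : J ⥤ Alg(T)` with vertex `X` factors through the subalgebra of `X` generated by the images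
of its legs. This subalgebra is obtained by iterating `S ↦ S ∪ a(T S)` along the well-order
`κ.ord.ToType`: as this index category is `κ`-filtered, `T` preserves the union, so every
element of `T` of the union comes from a stage and its image under `a` lies in the next one.
Counting along the iteration bounds the size of the subalgebra in terms of `F` alone, and
algebras of bounded size form a small set up to isomorphism.
-/

universe u

open Limits

section

variable {C : Type u} [SmallCategory C]

noncomputable def totalCard (X : C ⥤ Type u) : Cardinal.{u} :=
  Cardinal.mk (Σ c, X.obj c)

lemma totalCard_congr {X Y : C ⥤ Type u} (e : X ≅ Y) : totalCard X = totalCard Y :=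
  Cardinal.mk_congr (Equiv.sigmaCongrRight fun c => (e.app c).toEquiv)

/-- Functors whose values are subsets of a fixed type `β`: a small type which, up to
isomorphism, contains every functor of total cardinality at most `#β`. -/
structure SubsetFunctor (C : Type u) [SmallCategory C] (β : Type u) : Type u where
  obj : C → Set β
  map : ∀ {c d : C}, (c ⟶ d) → obj c → obj d
  map_id : ∀ c x, map (𝟙 c) x = x
  map_comp : ∀ {c d e : C} (f : c ⟶ d) (g : d ⟶ e) x, map (f ≫ g) x = map g (map f x)

namespace SubsetFunctor

variable {β : Type u}

def toFunctor (p : SubsetFunctor C β) : C ⥤ Type u where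
  obj c := p.obj c
  map f := ↾(p.map f)
  map_id c := by ext x; exact Subtype.ext_iff.mp (p.map_id c x)
  map_comp f g := by ext x; exact Subtype.ext_iff.mp (p.map_comp f g x)

lemma exists_iso_toFunctor (X : C ⥤ Type u) (h : totalCard X ≤ Cardinal.mk β) :
    ∃ p : SubsetFunctor C β, Nonempty (X ≅ p.toFunctor) := by
  obtain ⟨e⟩ := h
  let eqv (c : C) : X.obj c ≃ Set.range (fun x => e ⟨c, x⟩) :=
    Equiv.ofInjective _ (e.injective.comp sigma_mk_injective)
  refine ⟨{ obj c := Set.range (fun x => e ⟨c, x⟩)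
            map f y := eqv _ (X.map f ((eqv _).symm y))
            map_id c x := by simp
            map_comp f g x := by simp }, ⟨NatIso.ofComponents (fun c => (eqv c).toIso) ?_⟩⟩
  intro c d f
  ext x
  simp [toFunctor]

end SubsetFunctor

noncomputable def totalCardBound (G : (C ⥤ Type u) ⥤ (C ⥤ Type u)) (l : Cardinal.{u}) :
    Cardinal.{u} :=
  ⨆ p : SubsetFunctor C l.out, totalCard (G.obj p.toFunctor)

lemma totalCard_obj_le_totalCardBound (G : (C ⥤ Type u) ⥤ (C ⥤ Type u))
    {X : C ⥤ Type u} {l : Cardinal.{u}} (h : totalCard X ≤ l) :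
    totalCard (G.obj X) ≤ totalCardBound G l := by
  obtain ⟨p, ⟨e⟩⟩ := SubsetFunctor.exists_iso_toFunctor X (β := l.out) (by rwa [Cardinal.mk_out])
  rw [totalCard_congr (G.mapIso e)]
  exact le_ciSup Cardinal.bddAbove_of_small p

namespace CategoryTheory.Subfunctor

variable {F : C ⥤ Type u}

def total (S : Subfunctor F) : Set (Σ c, F.obj c) := {x | x.2 ∈ S.obj x.1}

lemma totalCard_toFunctor (S : Subfunctor F) : totalCard S.toFunctor = Cardinal.mk S.total :=
  Cardinal.mk_congr
    { toFun x := ⟨⟨x.1, x.2⟩, x.2.2⟩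
      invFun y := ⟨y.1.1, y.1.2, y.2⟩
      left_inv _ := rfl
      right_inv _ := rfl }

lemma total_sup (S S' : Subfunctor F) : (S ⊔ S').total = S.total ∪ S'.total := rfl

lemma total_iSup {ι : Type u} (S : ι → Subfunctor F) : (⨆ i, S i).total = ⋃ i, (S i).total := by
  ext x
  simp [total]

lemma total_range {G : C ⥤ Type u} (f : G ⟶ F) :
    (range f).total = Set.range (fun x : Σ c, G.obj c => (⟨x.1, f.app x.1 x.2⟩ : Σ c, F.obj c)) := by
  ext ⟨c, y⟩
  simp [total, range]

lemma totalCard_sup_le (S S' : Subfunctor F) :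
    totalCard (S ⊔ S').toFunctor ≤ totalCard S.toFunctor + totalCard S'.toFunctor := by
  simpa only [totalCard_toFunctor, total_sup] using Cardinal.mk_union_le _ _

lemma totalCard_iSup_le {ι : Type u} (S : ι → Subfunctor F) :
    totalCard (⨆ i, S i).toFunctor ≤ Cardinal.mk ι * ⨆ i, totalCard (S i).toFunctor := by
  simpa only [totalCard_toFunctor, total_iSup] using Cardinal.mk_iUnion_le _

lemma totalCard_range_le {G : C ⥤ Type u} (f : G ⟶ F) :
    totalCard (range f).toFunctor ≤ totalCard G := by
  rw [totalCard_toFunctor, total_range]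
  exact Cardinal.mk_range_le

variable (F) in
def underlying : Subfunctor F ⥤ (C ⥤ Type u) where
  obj S := S.toFunctor
  map h := homOfLe (leOfHom h)

variable {J : Type u} [Preorder J] [IsDirectedOrder J] [Nonempty J]
  {S : J → Subfunctor F} (hS : Monotone S)

def iSupCocone : Cocone (hS.functor ⋙ underlying F) where
  pt := (⨆ j, S j).toFunctor
  ι := { app j := homOfLe (le_iSup S j) }

noncomputable def isColimitISupCocone : IsColimit (iSupCocone hS) :=
  evaluationJointlyReflectsColimits _ fun c =>
    Types.FilteredColimit.isColimitOf _ _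
      (fun x => by
        obtain ⟨j, hj⟩ := Set.mem_iUnion.mp ((iSup_obj S c).subset x.2)
        exact ⟨j, ⟨x.1, hj⟩, rfl⟩)
      (fun i j xi xj h => by
        obtain ⟨k, hik, hjk⟩ := directed_of (· ≤ ·) i j
        have hval := congrArg Subtype.val h
        exact ⟨k, homOfLE hik, homOfLE hjk, Subtype.ext hval⟩)

end CategoryTheory.Subfunctor

namespace CategoryTheory.Monad

variable {T : Monad (C ⥤ Type u)}

variable (T) in
noncomputable def chainCardBound {K : Type u} [LinearOrder K] [SuccOrder K] [WellFoundedLT K]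
    (l₀ : Cardinal.{u}) (k : K) : Cardinal.{u} :=
  transfiniteIterate (fun l => l + totalCardBound T.toFunctor l) k l₀

-- Starting at or above `#K` and `ℵ₀` makes each limit stage absorb the union of its
-- predecessors: `#(Set.Iio k) * b ≤ b * b = b`.
variable (T) in
noncomputable def closureCardBound (K : Type u) [LinearOrder K] [SuccOrder K] [WellFoundedLT K]
    (l : Cardinal.{u}) : Cardinal.{u} :=
  Cardinal.mk K * ⨆ k : K, T.chainCardBound (l ⊔ Cardinal.mk K ⊔ Cardinal.aleph0) k

lemma le_chainCardBound {K : Type u} [LinearOrder K] [SuccOrder K] [WellFoundedLT K] [OrderBot K]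
    (l₀ : Cardinal.{u}) (k : K) : l₀ ≤ T.chainCardBound l₀ k := by
  induction k using SuccOrder.limitRecOn with
  | isMin k hk => rw [hk.eq_bot, chainCardBound, transfiniteIterate_bot]
  | succ k hk ih =>
    rw [chainCardBound, transfiniteIterate_succ _ _ _ hk]
    exact ih.trans le_self_add
  | isSuccLimit k hk ih =>
    rw [chainCardBound, transfiniteIterate_limit _ _ _ hk]
    exact (ih ⊥ hk.bot_lt).trans
      (le_ciSup (f := fun x : Set.Iio k => T.chainCardBound l₀ x.1) Cardinal.bddAbove_of_small
        ⟨⊥, hk.bot_lt⟩)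

namespace Algebra

variable (A : T.Algebra)

abbrev structRange (S : Subfunctor A.A) : Subfunctor A.A :=
  Subfunctor.range (T.map S.ι ≫ A.a)

abbrev IsSubalgebra (S : Subfunctor A.A) : Prop :=
  A.structRange S ≤ S

noncomputable def subalgebra {S : Subfunctor A.A} (hS : A.IsSubalgebra S) : T.Algebra where
  A := S.toFunctor
  a := S.lift (T.map S.ι ≫ A.a) hS
  unit := by
    rw [← cancel_mono S.ι, Category.assoc, Subfunctor.lift_ι, ← T.η.naturality_assoc, A.unit]
    rfl
  assoc := by
    rw [← cancel_mono S.ι]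
    simp only [Category.assoc, Subfunctor.lift_ι]
    rw [← T.μ.naturality_assoc, ← Functor.map_comp_assoc, Subfunctor.lift_ι]
    simp [A.assoc]

noncomputable def subalgebraι {S : Subfunctor A.A} (hS : A.IsSubalgebra S) :
    A.subalgebra hS ⟶ A where
  f := S.ι
  h := (S.lift_ι _ hS).symm

instance {S : Subfunctor A.A} (hS : A.IsSubalgebra S) : Mono (A.subalgebraι hS) :=
  ⟨fun _ _ e => Hom.ext ((cancel_mono S.ι).mp (congrArg Hom.f e))⟩

noncomputable def corestrict {B : T.Algebra} (φ : B ⟶ A) {S : Subfunctor A.A}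
    (hS : A.IsSubalgebra S) (hφ : Subfunctor.range φ.f ≤ S) : B ⟶ A.subalgebra hS where
  f := S.lift φ.f hφ
  h := by
    dsimp only [subalgebra]
    rw [← cancel_mono S.ι]
    simp [← Functor.map_comp_assoc]

@[simp]
lemma corestrict_subalgebraι {B : T.Algebra} (φ : B ⟶ A) {S : Subfunctor A.A}
    (hS : A.IsSubalgebra S) (hφ : Subfunctor.range φ.f ≤ S) :
    A.corestrict φ hS hφ ≫ A.subalgebraι hS = φ :=
  Hom.ext (S.lift_ι φ.f hφ)

lemma isSubalgebra_iSup {J : Type u} [Preorder J] [IsDirectedOrder J] [Nonempty J]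
    [PreservesColimitsOfShape J T.toFunctor] {S : J → Subfunctor A.A} (hS : Monotone S)
    (h : ∀ j, ∃ k, A.structRange (S j) ≤ S k) : A.IsSubalgebra (⨆ j, S j) := by
  rintro c _ ⟨x, rfl⟩
  have hc := isColimitOfPreserves ((evaluation C (Type u)).obj c)
    (isColimitOfPreserves T.toFunctor (Subfunctor.isColimitISupCocone hS))
  obtain ⟨j, (y : (T.obj (S j).toFunctor).obj c), rfl⟩ :=
    Types.jointly_surjective_of_isColimit hc x
  obtain ⟨k, hk⟩ := h j
  have hy : (T.map (⨆ j, S j).ι ≫ A.a).app c ((T.map (Subfunctor.homOfLe (le_iSup S j))).app c y)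
      = (T.map (S j).ι ≫ A.a).app c y := by
    change (T.map (Subfunctor.homOfLe _) ≫ T.map (⨆ j, S j).ι ≫ A.a).app c y = _
    rw [← Functor.map_comp_assoc, Subfunctor.homOfLe_ι]
  exact le_iSup S k c (hk c (hy ▸ ⟨y, rfl⟩))

def closureStep (S : Subfunctor A.A) : Subfunctor A.A :=
  S ⊔ A.structRange S

lemma le_closureStep (S : Subfunctor A.A) : S ≤ A.closureStep S := le_sup_left

lemma totalCard_closureStep_le {S : Subfunctor A.A} {l : Cardinal.{u}}
    (h : totalCard S.toFunctor ≤ l) :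
    totalCard (A.closureStep S).toFunctor ≤ l + totalCardBound T.toFunctor l :=
  (Subfunctor.totalCard_sup_le _ _).trans
    (add_le_add h ((Subfunctor.totalCard_range_le _).trans (totalCard_obj_le_totalCardBound _ h)))

variable {K : Type u} [LinearOrder K] [SuccOrder K] [WellFoundedLT K]

noncomputable def closureChain (S₀ : Subfunctor A.A) (k : K) : Subfunctor A.A :=
  transfiniteIterate A.closureStep k S₀

variable (K) in
noncomputable def closure (S₀ : Subfunctor A.A) : Subfunctor A.A :=
  ⨆ k : K, A.closureChain S₀ k

variable [OrderBot K]

lemma le_closure (S₀ : Subfunctor A.A) : S₀ ≤ A.closure K S₀ := by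
  have h : A.closureChain S₀ (⊥ : K) = S₀ := transfiniteIterate_bot _ _
  exact h.ge.trans (le_iSup (A.closureChain S₀) ⊥)

lemma isSubalgebra_closure [NoMaxOrder K] [PreservesColimitsOfShape K T.toFunctor]
    (S₀ : Subfunctor A.A) : A.IsSubalgebra (A.closure K S₀) :=
  A.isSubalgebra_iSup (monotone_transfiniteIterate _ _ A.le_closureStep) fun k =>
    ⟨Order.succ k, by
      unfold closureChain
      rw [transfiniteIterate_succ _ _ _ (not_isMax k)]
      exact le_sup_right⟩

lemma totalCard_closureChain_le {S₀ : Subfunctor A.A} {l₀ : Cardinal.{u}}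
    (h₀ : totalCard S₀.toFunctor ≤ l₀) (hK : Cardinal.mk K ≤ l₀) (hl₀ : Cardinal.aleph0 ≤ l₀)
    (k : K) : totalCard (A.closureChain S₀ k).toFunctor ≤ T.chainCardBound l₀ k := by
  induction k using SuccOrder.limitRecOn with
  | isMin k hk => rwa [hk.eq_bot, closureChain, chainCardBound, transfiniteIterate_bot,
      transfiniteIterate_bot]
  | succ k hk ih =>
    rw [closureChain, chainCardBound, transfiniteIterate_succ _ _ _ hk,
      transfiniteIterate_succ _ _ _ hk]
    exact A.totalCard_closureStep_le ih
  | isSuccLimit k hk ih =>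
    have hb : T.chainCardBound l₀ k = ⨆ x : Set.Iio k, T.chainCardBound l₀ x.1 :=
      transfiniteIterate_limit _ _ _ hk
    have hl₀k : l₀ ≤ T.chainCardBound l₀ k := le_chainCardBound l₀ k
    have hIio : Cardinal.mk (Set.Iio k) ≤ T.chainCardBound l₀ k :=
      Cardinal.mk_set_le _ |>.trans hK |>.trans hl₀k
    rw [closureChain, transfiniteIterate_limit _ _ _ hk]
    calc totalCard (⨆ x : Set.Iio k, A.closureChain S₀ x.1).toFunctor
        ≤ Cardinal.mk (Set.Iio k) * ⨆ x : Set.Iio k, totalCard (A.closureChain S₀ x.1).toFunctor :=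
          Subfunctor.totalCard_iSup_le _
      _ ≤ T.chainCardBound l₀ k * T.chainCardBound l₀ k :=
          mul_le_mul' hIio (hb ▸ ciSup_mono Cardinal.bddAbove_of_small fun x => ih x x.2)
      _ = T.chainCardBound l₀ k := Cardinal.mul_eq_self (hl₀.trans hl₀k)

lemma totalCard_closure_le {S₀ : Subfunctor A.A} {l : Cardinal.{u}}
    (h₀ : totalCard S₀.toFunctor ≤ l) :
    totalCard (A.closure K S₀).toFunctor ≤ T.closureCardBound K l :=
  (Subfunctor.totalCard_iSup_le _).trans <| mul_le_mul' le_rfl <|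
    ciSup_mono Cardinal.bddAbove_of_small fun k =>
      A.totalCard_closureChain_le (h₀.trans (le_sup_left.trans le_sup_left))
        (le_sup_right.trans le_sup_left) le_sup_right k

variable (K) [NoMaxOrder K] [PreservesColimitsOfShape K T.toFunctor]

lemma exists_subalgebra_factorization {J : Type u} [SmallCategory J] {F : J ⥤ T.Algebra}
    {X : T.Algebra} (h : F ⟶ (Functor.const J).obj X) :
    ∃ (S : Subfunctor X.A) (hS : X.IsSubalgebra S),
      totalCard S.toFunctor ≤ T.closureCardBound K (Cardinal.mk J * ⨆ j, totalCard (F.obj j).A) ∧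
      ∃ h' : F ⟶ (Functor.const J).obj (X.subalgebra hS),
        h' ≫ (Functor.const J).map (X.subalgebraι hS) = h := by
  let S₀ : Subfunctor X.A := ⨆ j, Subfunctor.range (h.app j).f
  have hS₀ : totalCard S₀.toFunctor ≤ Cardinal.mk J * ⨆ j, totalCard (F.obj j).A :=
    (Subfunctor.totalCard_iSup_le _).trans <| mul_le_mul' le_rfl <|
      ciSup_mono Cardinal.bddAbove_of_small fun j => Subfunctor.totalCard_range_le _
  have hS : X.IsSubalgebra (X.closure K S₀) := X.isSubalgebra_closure S₀
  have hrange (j : J) : Subfunctor.range (h.app j).f ≤ X.closure K S₀ :=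
    (le_iSup (α := Subfunctor X.A) (fun j => Subfunctor.range (h.app j).f) j).trans
      (X.le_closure S₀)
  let h' : F ⟶ (Functor.const J).obj (X.subalgebra hS) :=
    { app j := X.corestrict (h.app j) hS (hrange j)
      naturality j j' f := by
        rw [← cancel_mono (X.subalgebraι hS)]
        simp }
  refine ⟨X.closure K S₀, hS, X.totalCard_closure_le hS₀, h', ?_⟩
  ext j : 2
  simp [h']

end Algebra

variable (T) in
def AlgebraStructure (Y : C ⥤ Type u) : Type u :=
  {a : T.obj Y ⟶ Y // T.η.app Y ≫ a = 𝟙 Y ∧ T.μ.app Y ≫ a = T.map a ≫ a}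

def AlgebraStructure.toAlgebra {Y : C ⥤ Type u} (a : AlgebraStructure T Y) : T.Algebra where
  A := Y
  a := a.1
  unit := a.2.1
  assoc := a.2.2

lemma Algebra.exists_iso_toAlgebra {β : Type u} (B : T.Algebra)
    (h : totalCard B.A ≤ Cardinal.mk β) :
    ∃ (p : SubsetFunctor C β) (a : AlgebraStructure T p.toFunctor),
      Nonempty (B ≅ a.toAlgebra) := by
  obtain ⟨p, ⟨e⟩⟩ := SubsetFunctor.exists_iso_toFunctor B.A h
  refine ⟨p, ⟨T.map e.inv ≫ B.a ≫ e.hom, ?_, ?_⟩, ⟨Algebra.isoMk e ?_⟩⟩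
  · simp [← T.η.naturality_assoc, B.unit_assoc]
  · rw [← T.μ.naturality_assoc]
    simp [B.assoc_assoc]
  · simp [AlgebraStructure.toAlgebra, ← Functor.map_comp_assoc]

theorem solutionSetCondition_const (K : Type u) [LinearOrder K] [SuccOrder K]
    [WellFoundedLT K] [OrderBot K] [NoMaxOrder K] [PreservesColimitsOfShape K T.toFunctor]
    (J : Type u) [SmallCategory J] :
    SolutionSetCondition.{u} (Functor.const J : T.Algebra ⥤ (J ⥤ T.Algebra)) := by
  intro F
  let β := (T.closureCardBound K (Cardinal.mk J * ⨆ j, totalCard (F.obj j).A)).out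
  refine ⟨Σ (p : SubsetFunctor C β) (a : AlgebraStructure T p.toFunctor),
      F ⟶ (Functor.const J).obj a.toAlgebra, fun i => i.2.1.toAlgebra, fun i => i.2.2, ?_⟩
  intro X h
  obtain ⟨S, hS, hcard, h', hh'⟩ := X.exists_subalgebra_factorization K h
  obtain ⟨p, a, ⟨e⟩⟩ := (X.subalgebra hS).exists_iso_toAlgebra (β := β)
    (by rwa [Cardinal.mk_out])
  refine ⟨⟨p, a, h' ≫ (Functor.const J).map e.hom⟩, e.inv ≫ X.subalgebraι hS, ?_⟩
  simp [← hh']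

end CategoryTheory.Monad

end

lemma isCardinalFiltered_of_isCardinalFiltered (J : Type u) [SmallCategory J]
    (κ : Cardinal.{u}) [Fact κ.IsRegular] [CategoryTheory.IsCardinalFiltered J κ] :
    _root_.IsCardinalFiltered J κ := fun _ _ hA F =>
  CategoryTheory.IsCardinalFiltered.nonempty_cocone F
    ((hasCardinalLT_iff_cardinal_mk_lt _ _).mpr hA)

/-- paper's Corollary 5.5, for presheaf categories in
1-categorical form: if `T` is a monad on `Pr(C) = Cᵒᵖ ⥤ Type` whose underlying
endofunctor preserves colimits of `κ`-filtered diagrams for some regular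
cardinal `κ`, then the Eilenberg–Moore category of `T`-algebras has all small
colimits. -/
theorem stmt_11 {C : Type u} [SmallCategory C] (κ : Cardinal.{u})
    (hκ : κ.IsRegular) (T : Monad (Cᵒᵖ ⥤ Type u))
    (hT : ∀ (J : Type u) [SmallCategory J], IsCardinalFiltered J κ →
      Limits.PreservesColimitsOfShape J T.toFunctor) :
    Limits.HasColimits T.Algebra := by
  have : Fact κ.IsRegular := ⟨hκ⟩
  have : Nonempty κ.ord.ToType := Cardinal.nonempty_ord_toType hκ.ne_zero
  let : OrderBot κ.ord.ToType := WellFoundedLT.toOrderBot _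
  have : NoMaxOrder κ.ord.ToType := Cardinal.noMaxOrder hκ.aleph0_le
  have := hT κ.ord.ToType (isCardinalFiltered_of_isCardinalFiltered _ κ)
  have : HasLimits T.Algebra := hasLimits_of_hasLimits_createsLimits (Monad.forget T)
  exact ⟨fun J _ => hasColimitsOfShape_iff_isRightAdjoint_const.mpr
    (isRightAdjoint_of_preservesLimits_of_solutionSetCondition _
      (Monad.solutionSetCondition_const κ.ord.ToType J))⟩
end

section
/- Let T be a monad on a small category C, and let Kl(T) be its Kleisli category: objects are those of C and morphisms c ⟶ d in Kl(T) are morphisms c ⟶ T(d) in C, with composition given by the multiplication of T. Let N : Alg(T) ⥤ Pr(Kl(T)) be the functor sending a T-algebra X = (A, a : T A ⟶ A) to the presheaf c ↦ Hom_C(c, A), where a Kleisli morphism f : c' ⟶ T(c) acts by sending g : c ⟶ A to f ≫ T(g) ≫ a. Then: (1) N is fully faithful; and (2) a presheaf P on Kl(T) lies in the essential image of N if and only if the restriction of P along the free functor C ⥤ Kl(T) (identity on objects, sending g : c ⟶ d to g composed with the unit of T) is a representable presheaf on C. -/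
open CategoryTheory

universe v u

variable {C : Type u} [Category.{v} C]

/-- View an object of the Kleisli category of `T` as an object of `C`
(the two classes of objects coincide by definition). -/
def Kleisli.toBase {T : Monad C} (c : Kleisli T) : C := c.of

/-- The presheaf on the Kleisli category of `T` associated to a `T`-algebra
`X = (A, a)`: it sends `c` to `Hom_C(c, A)`, and a Kleisli morphism
`f : c' ⟶ T c` acts by `g ↦ f ≫ T g ≫ a`. -/
def algebraPresheaf (T : Monad C) (X : T.Algebra) : (Kleisli T)ᵒᵖ ⥤ Type v where
  obj c := Kleisli.toBase c.unop ⟶ X.A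
  map {c c'} f := TypeCat.ofHom fun g =>
    (show Kleisli.toBase c'.unop ⟶ T.obj (Kleisli.toBase c.unop) from f.unop.of) ≫
      T.map g ≫ X.a
  map_id c := by
    ext g
    change T.η.app _ ≫ T.map g ≫ X.a = g
    rw [← Category.assoc, ← T.η.naturality g]
    dsimp
    rw [Category.assoc, X.unit, Category.comp_id]
  map_comp {c c' c''} f g := by
    ext h
    show ((show Kleisli.toBase c''.unop ⟶ T.obj (Kleisli.toBase c'.unop) from g.unop.of) ≫
          T.map (show Kleisli.toBase c'.unop ⟶ T.obj (Kleisli.toBase c.unop) from f.unop.of) ≫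
          T.μ.app (Kleisli.toBase c.unop)) ≫ T.map h ≫ X.a =
        (show Kleisli.toBase c''.unop ⟶ T.obj (Kleisli.toBase c'.unop) from g.unop.of) ≫
          T.map ((show Kleisli.toBase c'.unop ⟶ T.obj (Kleisli.toBase c.unop) from f.unop.of) ≫
            T.map h ≫ X.a) ≫ X.a
    simp only [Kleisli.toBase] at h ⊢
    simp only [Functor.map_comp, Category.assoc]
    rw [← X.assoc, ← T.μ.naturality_assoc h X.a]
    rfl

/-- The restricted-Yoneda functor `N : Alg(T) ⥤ Pr(Kl(T))` sending a
`T`-algebra `X` to the presheaf `c ↦ Hom_C(c, X.A)` on the Kleisli category. -/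
def algebraToKleisliPresheaves (T : Monad C) :
    T.Algebra ⥤ ((Kleisli T)ᵒᵖ ⥤ Type v) where
  obj X := algebraPresheaf T X
  map {X Y} h :=
    { app := fun c => TypeCat.ofHom fun g => g ≫ h.f
      naturality := fun c c' f => by
        ext g
        change (_ ≫ T.map g ≫ X.a) ≫ h.f = _ ≫ T.map (g ≫ h.f) ≫ Y.a
        change Kleisli.toBase c.unop ⟶ X.A at g
        simp only [Kleisli.toBase] at g ⊢
        simp only [Functor.map_comp, Category.assoc, h.h]
    }
  map_id X := by
    ext c g
    simp [algebraPresheaf]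
    rfl
  map_comp {X Y Z} f g := by
    ext c h
    simp [algebraPresheaf]
    change _ = (h ≫ f.f) ≫ g.f
    exact (Category.assoc _ _ _).symm

/-!
Restricted along the free functor `C ⥤ Kl(T)`, the presheaf of a `T`-algebra `(A, a)` is the
representable `Hom(-, A)`, so by Yoneda a map of such presheaves is postcomposition with its
value `φ` on `𝟙 A`; naturality along the Kleisli morphism `𝟙 : T A ⟶ T A`, which sends `𝟙 A`
to `a`, says that `φ` is an algebra map.

Conversely, if the restriction of `P` is represented by `A`, the action of `𝟙 : T A ⟶ T A` on
the universal element defines `a : T A ⟶ A`. A Kleisli morphism `k : c ⟶ T d` followed by a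
free morphism `d ⟶ A` equals a free morphism followed by `𝟙 : T A ⟶ T A`, so `k` acts on `P`
by `h ↦ k ≫ T h ≫ a`; functoriality of `P` on `η = 𝟙` and on `μ = 𝟙 ≫ 𝟙` (in `Kl(T)`) then
gives the algebra axioms.
-/

open Opposite Kleisli.Adjunction

namespace CategoryTheory.Kleisli

variable {T : Monad C}

abbrev ofHom {c d : C} (k : c ⟶ T.obj d) : (toKleisli T).obj c ⟶ (toKleisli T).obj d := Hom.mk k

lemma ofHom_comp_toKleisli_map {c d e : C} (k : c ⟶ T.obj d) (h : d ⟶ e) :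
    ofHom k ≫ (toKleisli T).map h = ofHom (k ≫ T.map h) := by
  ext
  change k ≫ T.map (h ≫ T.η.app e) ≫ T.μ.app e = k ≫ T.map h
  simp

lemma toKleisli_map_comp_ofHom {c d e : C} (g : c ⟶ d) (k : d ⟶ T.obj e) :
    (toKleisli T).map g ≫ ofHom k = ofHom (g ≫ k) := by
  ext
  change (g ≫ T.η.app d) ≫ T.map k ≫ T.μ.app e = g ≫ k
  simp [← T.η.naturality_assoc]

lemma ofHom_η (c : C) : ofHom (T.η.app c) = 𝟙 ((toKleisli T).obj c) := rfl

lemma ofHom_μ (c : C) :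
    ofHom (T.μ.app c) = ofHom (𝟙 (T.obj (T.obj c))) ≫ ofHom (𝟙 (T.obj c)) := by
  ext
  change _ = 𝟙 _ ≫ T.map (𝟙 _) ≫ T.μ.app c
  simp

end CategoryTheory.Kleisli

section AlgebraPresheaf

variable {T : Monad C}

lemma algebraPresheaf_map_ofHom_apply (X : T.Algebra) {c d : C} (k : c ⟶ T.obj d)
    (h : d ⟶ X.A) :
    (algebraPresheaf T X).map (Kleisli.ofHom k).op h = k ≫ T.map h ≫ X.a :=
  rfl

lemma algebraPresheaf_map_toKleisli_apply (X : T.Algebra) {c d : C} (g : c ⟶ d) (h : d ⟶ X.A) :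
    (algebraPresheaf T X).map ((toKleisli T).map g).op h = g ≫ h := by
  change (g ≫ T.η.app d) ≫ T.map h ≫ X.a = g ≫ h
  rw [Category.assoc, ← T.η.naturality_assoc, Functor.id_map, X.unit]
  exact congrArg (g ≫ ·) (Category.comp_id h)

lemma algebraPresheaf_natTrans_app_apply {X Y : T.Algebra}
    (α : algebraPresheaf T X ⟶ algebraPresheaf T Y) {c : C} (g : c ⟶ X.A) :
    α.app (op ((toKleisli T).obj c)) g = g ≫ α.app (op ((toKleisli T).obj X.A)) (𝟙 X.A) := by
  have hX : (algebraPresheaf T X).map ((toKleisli T).map g).op (𝟙 X.A) = g :=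
    (algebraPresheaf_map_toKleisli_apply X g _).trans (Category.comp_id g)
  rw [← NatTrans.naturality_apply α ((toKleisli T).map g).op (𝟙 X.A) |>.trans
    (algebraPresheaf_map_toKleisli_apply Y g _), hX]

def restrictAlgebraPresheafRepresentableBy (X : T.Algebra) :
    ((toKleisli T).op ⋙ algebraPresheaf T X).RepresentableBy X.A where
  homEquiv := Equiv.refl _
  homEquiv_comp f g := (algebraPresheaf_map_toKleisli_apply X f g).symm

def algebraHomOfNatTrans {X Y : T.Algebra} (α : algebraPresheaf T X ⟶ algebraPresheaf T Y) :
    X ⟶ Y where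
  f := α.app (op ((toKleisli T).obj X.A)) (𝟙 X.A)
  h := by
    have nat := NatTrans.naturality_apply α (Kleisli.ofHom (𝟙 (T.obj X.A))).op (𝟙 X.A)
    simp only [algebraPresheaf_map_ofHom_apply, CategoryTheory.Functor.map_id,
      Category.id_comp] at nat
    rw [← algebraPresheaf_natTrans_app_apply]
    exact (nat.trans ((algebraPresheaf_map_ofHom_apply Y _ _).trans (Category.id_comp _))).symm

def algebraToKleisliPresheavesFullyFaithful (T : Monad C) :
    (algebraToKleisliPresheaves T).FullyFaithful where
  preimage := algebraHomOfNatTrans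
  map_preimage α := by
    ext c g
    exact (algebraPresheaf_natTrans_app_apply α g).symm
  preimage_map h := by
    ext
    exact Category.id_comp h.f

end AlgebraPresheaf

namespace CategoryTheory.Functor.RepresentableBy

variable {T : Monad C} {P : (Kleisli T)ᵒᵖ ⥤ Type v} {A : C}
  (R : ((toKleisli T).op ⋙ P).RepresentableBy A)

def structureMap : T.obj A ⟶ A :=
  R.homEquiv.symm (P.map (Kleisli.ofHom (𝟙 (T.obj A))).op (R.homEquiv (𝟙 A)))

lemma homEquiv_eq_map {c : C} (h : c ⟶ A) :
    R.homEquiv h = P.map ((toKleisli T).map h).op (R.homEquiv (𝟙 A)) := by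
  simpa using R.homEquiv_comp h (𝟙 A)

lemma map_ofHom_homEquiv {c d : C} (k : c ⟶ T.obj d) (h : d ⟶ A) :
    P.map (Kleisli.ofHom k).op (R.homEquiv h) =
      R.homEquiv (k ≫ T.map h ≫ R.structureMap) := by
  have factor : Kleisli.ofHom k ≫ (toKleisli T).map h =
      (toKleisli T).map (k ≫ T.map h) ≫ Kleisli.ofHom (𝟙 (T.obj A)) := by
    rw [Kleisli.ofHom_comp_toKleisli_map, Kleisli.toKleisli_map_comp_ofHom, Category.comp_id]
  rw [R.homEquiv_eq_map h, ← Category.assoc, R.homEquiv_comp, structureMap,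
    Equiv.apply_symm_apply, ← Functor.map_comp_apply, ← op_comp, factor, op_comp,
    Functor.map_comp_apply]
  rfl

lemma homEquiv_structureMap :
    R.homEquiv R.structureMap = P.map (Kleisli.ofHom (𝟙 (T.obj A))).op (R.homEquiv (𝟙 A)) :=
  R.homEquiv.apply_symm_apply _

lemma map_ofHom_homEquiv_id {c : C} (k : c ⟶ T.obj A) :
    P.map (Kleisli.ofHom k).op (R.homEquiv (𝟙 A)) = R.homEquiv (k ≫ R.structureMap) := by
  simpa using R.map_ofHom_homEquiv k (𝟙 A)

lemma structureMap_unit : T.η.app A ≫ R.structureMap = 𝟙 A := by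
  apply R.homEquiv.injective
  rw [← map_ofHom_homEquiv_id, Kleisli.ofHom_η]
  exact P.map_id_apply _ _

lemma structureMap_assoc :
    T.μ.app A ≫ R.structureMap = T.map R.structureMap ≫ R.structureMap := by
  apply R.homEquiv.injective
  rw [← map_ofHom_homEquiv_id, Kleisli.ofHom_μ, op_comp, Functor.map_comp_apply,
    ← homEquiv_structureMap, R.map_ofHom_homEquiv, Category.id_comp]

def algebra : T.Algebra where
  A := A
  a := R.structureMap
  unit := R.structureMap_unit
  assoc := R.structureMap_assoc

def algebraPresheafIso : algebraPresheaf T R.algebra ≅ P :=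
  NatIso.ofComponents (fun _ => R.homEquiv.toIso) fun f => by
    ext h
    exact (R.map_ofHom_homEquiv f.unop.of h).symm

end CategoryTheory.Functor.RepresentableBy

/-- paper's prop:EM_pb_of_Kl, 1-categorical form:
the restricted Yoneda functor `N : Alg(T) ⥤ Pr(Kl(T))` is fully faithful, and
a presheaf on the Kleisli category lies in its essential image if and only if
its restriction along the free functor `C ⥤ Kl(T)` is representable. -/
theorem stmt_13 {C : Type u} [SmallCategory C] (T : Monad C) :
    (algebraToKleisliPresheaves T).Full ∧
    (algebraToKleisliPresheaves T).Faithful ∧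
    ∀ P : (Kleisli T)ᵒᵖ ⥤ Type u,
      (algebraToKleisliPresheaves T).essImage P ↔
        ((Kleisli.Adjunction.toKleisli T).op ⋙ P).IsRepresentable := by
  have hN := algebraToKleisliPresheavesFullyFaithful T
  refine ⟨hN.full, hN.faithful, fun P => ⟨?_, fun _ => ?_⟩⟩
  · rintro ⟨X, ⟨i⟩⟩
    exact ((restrictAlgebraPresheafRepresentableBy X).ofIso
      (Functor.isoWhiskerLeft _ i)).isRepresentable
  · exact ⟨_, ⟨(Functor.representableBy _).algebraPresheafIso⟩⟩
end
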